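/- Let 𝔤 be a 3-dimensional real Lie algebra with an inner product ⟨·,·⟩, and suppose there exist a,b,c,d ∈ ℝ and an orthonormal basis {x₁,x₂,x₃} such that the only nonzero brackets are [x₁,x₂] = a x₂ + b x₃ and [x₁,x₃] = c x₂ + d x₃. Then the Ricci operator satisfies Ric(x₁) = -(a² + d² + (1/2)(b+c)²) x₁, Ric(x₂) = -(a(a+d) + (1/2)(b² - c²)) x₂ - (ac + bd) x₃, and Ric(x₃) = -(ac + bd) x₂ - (d(a+d) - (1/2)(b² - c²)) x₃. -/
import Mathlib


open Matrix

noncomputable section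

/-- standard basis of ℝ³ -/
def e (i : Fin 3) : Fin 3 → ℝ := Pi.single i 1

/-- standard inner product on ℝ³ (the basis `e` is orthonormal) -/
def dotp (x y : Fin 3 → ℝ) : ℝ := ∑ i, x i * y i

/-- Levi-Civita connection of the metric Lie algebra (ℝ³, br, dotp), via
    2⟨∇_X Y, Z⟩ = ⟨[Z,X],Y⟩ + ⟨X,[Z,Y]⟩ + ⟨[X,Y],Z⟩. -/
def nabla (br : (Fin 3 → ℝ) → (Fin 3 → ℝ) → (Fin 3 → ℝ)) (X Y : Fin 3 → ℝ) :
    Fin 3 → ℝ :=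
  fun k => (1/2) * (dotp (br (e k) X) Y + dotp X (br (e k) Y) + dotp (br X Y) (e k))

/-- Riemannian curvature R(X,Y)Z = ∇_X∇_Y Z - ∇_Y∇_X Z - ∇_{[X,Y]}Z. -/
def curv (br : (Fin 3 → ℝ) → (Fin 3 → ℝ) → (Fin 3 → ℝ)) (X Y Z : Fin 3 → ℝ) :
    Fin 3 → ℝ :=
  nabla br X (nabla br Y Z) - nabla br Y (nabla br X Z) - nabla br (br X Y) Z

/-- Ricci operator Ric(X) = Σᵢ R(X,eᵢ)eᵢ. -/
def ric (br : (Fin 3 → ℝ) → (Fin 3 → ℝ) → (Fin 3 → ℝ)) (X : Fin 3 → ℝ) :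
    Fin 3 → ℝ :=
  ∑ i, curv br X (e i) (e i)

/-- The bracket with [x₁,x₂] = a x₂ + b x₃, [x₁,x₃] = c x₂ + d x₃, [x₂,x₃] = 0. -/
def brGen (a b c d : ℝ) (x y : Fin 3 → ℝ) : Fin 3 → ℝ :=
  ![0,
    a * (x 0 * y 1 - x 1 * y 0) + c * (x 0 * y 2 - x 2 * y 0),
    b * (x 0 * y 1 - x 1 * y 0) + d * (x 0 * y 2 - x 2 * y 0)]

lemma nabla_brGen (a b c d : ℝ) (X Y : Fin 3 → ℝ) :
    nabla (brGen a b c d) X Y =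
      ![X 1 * Y 1 * a + (1/2)*(b+c)*(X 1 * Y 2 + X 2 * Y 1) + X 2 * Y 2 * d,
        (1/2)*(c-b)*(X 0 * Y 2) - X 1 * Y 0 * a - (1/2)*(b+c)*(X 2 * Y 0),
        (1/2)*(b-c)*(X 0 * Y 1) - (1/2)*(b+c)*(X 1 * Y 0) - X 2 * Y 0 * d] := by
  funext k
  fin_cases k <;>
    simp [nabla, brGen, dotp, e, Fin.sum_univ_three, Pi.single_apply] <;> ring

set_option maxHeartbeats 1600000 in
/-- Lemma 4.4 (Ricci operator of a 3-dimensional solvable metric Lie algebra). -/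
theorem ricci_general (a b c d : ℝ) :
    ric (brGen a b c d) (e 0) = ![-(a^2 + d^2 + (1/2) * (b + c)^2), 0, 0] ∧
    ric (brGen a b c d) (e 1) =
      ![0, -(a * (a + d) + (1/2) * (b^2 - c^2)), -(a * c + b * d)] ∧
    ric (brGen a b c d) (e 2) =
      ![0, -(a * c + b * d), -(d * (a + d) - (1/2) * (b^2 - c^2))] := by
  refine ⟨?_, ?_, ?_⟩ <;>
  · funext k
    fin_cases k <;>
    · simp only [ric, curv, Fin.sum_univ_three, Pi.sub_apply, nabla_brGen, brGen, e,
        Pi.single_apply, Matrix.cons_val_zero, Matrix.cons_val_one, Matrix.head_cons,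
        Matrix.cons_val_two, Matrix.tail_cons, Fin.ext_iff]
      norm_num
      try ring
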